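/- arXiv:math/0507486 — 2 statements merged into one kernel-verified Lean document; each statement's English description precedes it below -/
import Mathlib

section
/- Let K be a field, and let q be a cubic form (homogeneous of degree 3) over K. If q has a nontrivial zero over a quadratic extension L of K, then q has a nontrivial zero over K. -/
/-!
Write the zero over `L` as `v = x + θ y` with `x, y ∈ Kⁿ` and `θ ∉ K`. Unless `y = 0` or `q(y) = 0`,
the polynomial `t ↦ q(x + t y)` is a cubic over `K` (with leading coefficient `q(y)`) vanishing at
`θ`; the quadratic minimal polynomial of `θ` divides it and leaves a linear factor, hence a root
`t ∈ K`. The zero `x + t y` is nontrivial, for otherwise `v = (θ - t) y` and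
`q(v) = (θ - t)³ q(y) ≠ 0`.
-/

namespace Polynomial

theorem coeff_prod_sum_of_natDegree_le {R ι : Type*} [CommSemiring R] (s : Finset ι)
    (f : ι → R[X]) (d : ι → ℕ) (h : ∀ i ∈ s, (f i).natDegree ≤ d i) :
    (∏ i ∈ s, f i).coeff (∑ i ∈ s, d i) = ∏ i ∈ s, (f i).coeff (d i) := by
  classical
  induction s using Finset.induction with
  | empty => simp
  | insert a s ha ih =>
    rw [Finset.forall_mem_insert] at h
    rw [Finset.prod_insert ha, Finset.sum_insert ha, Finset.prod_insert ha,
      coeff_mul_add_eq_of_natDegree_le h.1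
        ((natDegree_prod_le s f).trans (Finset.sum_le_sum h.2)), ih h.2]

variable {K L : Type*} [Field K] [Field L] [Algebra K L]

theorem exists_isRoot_of_natDegree_eq_natDegree_minpoly_add_one {θ : L} (hθ : IsIntegral K θ)
    {P : K[X]} (hPθ : aeval θ P = 0) (hP : P.natDegree = (minpoly K θ).natDegree + 1) :
    ∃ t, P.IsRoot t := by
  obtain ⟨g, rfl⟩ := minpoly.dvd K θ hPθ
  have hg : g ≠ 0 := by rintro rfl; simp at hP
  rw [natDegree_mul (minpoly.ne_zero hθ) hg, add_right_inj] at hP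
  obtain ⟨t, ht⟩ := exists_root_of_degree_eq_one (degree_eq_iff_natDegree_eq hg |>.mpr hP)
  exact ⟨t, by rw [IsRoot, eval_mul, ht.eq_zero, mul_zero]⟩

theorem exists_isRoot_of_natDegree_eq_three (hdeg : Module.finrank K L = 2) {θ : L}
    (hθ : θ ∉ Set.range (algebraMap K L)) {P : K[X]} (hPθ : aeval θ P = 0)
    (hP : P.natDegree = 3) : ∃ t, P.IsRoot t := by
  have : Module.Finite K L := Module.finite_of_finrank_eq_succ hdeg
  have hθint : IsIntegral K θ := .of_finite K θ
  have hmin : (minpoly K θ).natDegree = 2 :=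
    ((minpoly.natDegree_le θ).trans_eq hdeg).antisymm ((minpoly.two_le_natDegree_iff hθint).mpr hθ)
  exact exists_isRoot_of_natDegree_eq_natDegree_minpoly_add_one hθint hPθ (by rw [hP, hmin])

end Polynomial

section QuadraticExtension

variable {K L : Type*} [Field K] [Field L] [Algebra K L]

theorem exists_notMem_range_algebraMap_of_finrank_ne_one (h : Module.finrank K L ≠ 1) :
    ∃ θ : L, θ ∉ Set.range (algebraMap K L) := by
  by_contra! hsurj
  exact h (Algebra.finrank_eq_one_iff_bijective_algebraMap.mpr ⟨(algebraMap K L).injective, hsurj⟩)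

theorem exists_algebraMap_add_mul_algebraMap_eq (hdeg : Module.finrank K L = 2) {θ : L}
    (hθ : θ ∉ Set.range (algebraMap K L)) (z : L) :
    ∃ a b : K, algebraMap K L a + θ * algebraMap K L b = z := by
  have hli : LinearIndependent K ![(1 : L), θ] := by
    rw [LinearIndependent.pair_iff' one_ne_zero]
    intro a ha
    exact hθ ⟨a, by rw [← ha, Algebra.smul_def, mul_one]⟩
  have hz : z ∈ Submodule.span K {1, θ} := by
    rw [← Matrix.range_cons_cons_empty, hli.span_eq_top_of_card_eq_finrank (by simp [hdeg])]
    trivial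
  obtain ⟨a, b, rfl⟩ := Submodule.mem_span_pair.mp hz
  exact ⟨a, b, by rw [Algebra.smul_def, Algebra.smul_def, mul_one, mul_comm θ]⟩

end QuadraticExtension

namespace MvPolynomial

open scoped Polynomial

variable {R σ : Type*} [CommSemiring R]

noncomputable def restrictLine (φ : MvPolynomial σ R) (x y : σ → R) : R[X] :=
  aeval (fun i => Polynomial.C (x i) + Polynomial.X * Polynomial.C (y i)) φ

theorem aeval_restrictLine {A : Type*} [CommSemiring A] [Algebra R A] (φ : MvPolynomial σ R)
    (x y : σ → R) (a : A) :
    Polynomial.aeval a (φ.restrictLine x y) =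
      aeval (fun i => algebraMap R A (x i) + a * algebraMap R A (y i)) φ := by
  rw [restrictLine, ← AlgHom.comp_apply, comp_aeval]
  simp only [map_add, map_mul, Polynomial.aeval_C, Polynomial.aeval_X]

theorem eval_restrictLine (φ : MvPolynomial σ R) (x y : σ → R) (t : R) :
    (φ.restrictLine x y).eval t = eval (x + t • y) φ := by
  rw [← Polynomial.coe_aeval_eq_eval, aeval_restrictLine, ← aeval_eq_eval]
  simp [Pi.add_def, Pi.smul_def]

namespace IsHomogeneous

variable {φ : MvPolynomial σ R} {m : ℕ}

theorem aeval_smul {A : Type*} [CommSemiring A] [Algebra R A] (hφ : φ.IsHomogeneous m) (c : A)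
    (w : σ → A) : MvPolynomial.aeval (c • w) φ = c ^ m * MvPolynomial.aeval w φ := by
  rw [aeval_def, aeval_def, eval₂_eq, eval₂_eq, Finset.mul_sum]
  refine Finset.sum_congr rfl fun d hd => ?_
  simp_rw [Pi.smul_apply, smul_eq_mul, mul_pow, Finset.prod_mul_distrib,
    Finset.prod_pow_eq_pow_sum, ← hφ.degree_eq_sum_deg_support hd]
  ring

theorem natDegree_aeval_le (hφ : φ.IsHomogeneous m) {p : σ → R[X]} {k : ℕ}
    (hp : ∀ i, (p i).natDegree ≤ k) : (MvPolynomial.aeval p φ).natDegree ≤ m * k := by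
  rw [aeval_def, eval₂_eq]
  refine Polynomial.natDegree_sum_le_of_forall_le _ _ fun d hd => ?_
  refine Polynomial.natDegree_C_mul_le _ _ |>.trans <| (Polynomial.natDegree_prod_le _ _).trans ?_
  rw [hφ.degree_eq_sum_deg_support hd, Finset.sum_mul]
  exact Finset.sum_le_sum fun i _ => Polynomial.natDegree_pow_le_of_le _ (hp i)

theorem coeff_aeval (hφ : φ.IsHomogeneous m) {p : σ → R[X]} {k : ℕ}
    (hp : ∀ i, (p i).natDegree ≤ k) :
    (MvPolynomial.aeval p φ).coeff (m * k) = eval (fun i => (p i).coeff k) φ := by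
  rw [aeval_def, eval₂_eq, eval_eq, Polynomial.finsetSum_coeff]
  refine Finset.sum_congr rfl fun d hd => ?_
  have hdeg : m * k = ∑ i ∈ d.support, d i * k := by
    rw [hφ.degree_eq_sum_deg_support hd, Finset.sum_mul]
  rw [Polynomial.algebraMap_eq, Polynomial.coeff_C_mul, hdeg,
    Polynomial.coeff_prod_sum_of_natDegree_le _ _ _ fun i _ =>
      Polynomial.natDegree_pow_le_of_le _ (hp i)]
  simp_rw [Polynomial.coeff_pow_of_natDegree_le (hp _)]

theorem natDegree_restrictLine_le (hφ : φ.IsHomogeneous m) (x y : σ → R) :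
    (φ.restrictLine x y).natDegree ≤ m := by
  have := hφ.natDegree_aeval_le (k := 1)
    (p := fun i => Polynomial.C (x i) + Polynomial.X * Polynomial.C (y i)) fun i => by
      compute_degree
  rwa [mul_one] at this

theorem coeff_restrictLine (hφ : φ.IsHomogeneous m) (x y : σ → R) :
    (φ.restrictLine x y).coeff m = eval y φ := by
  have := hφ.coeff_aeval (k := 1)
    (p := fun i => Polynomial.C (x i) + Polynomial.X * Polynomial.C (y i)) fun i => by
      compute_degree
  have hy : (fun i => (Polynomial.C (x i) + Polynomial.X * Polynomial.C (y i)).coeff 1) = y := by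
    ext i
    simp
  rwa [hy, mul_one] at this

theorem natDegree_restrictLine (hφ : φ.IsHomogeneous m) (x : σ → R) {y : σ → R}
    (hy : eval y φ ≠ 0) : (φ.restrictLine x y).natDegree = m :=
  (hφ.natDegree_restrictLine_le x y).antisymm
    (Polynomial.le_natDegree_of_ne_zero (by rwa [hφ.coeff_restrictLine]))

end IsHomogeneous

end MvPolynomial

open MvPolynomial in
theorem stmt_9 (K L : Type*) [Field K] [Field L] [Algebra K L]
    (hdeg : Module.finrank K L = 2)
    (n : ℕ) (q : MvPolynomial (Fin n) K) (hq : q.IsHomogeneous 3)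
    (hL : ∃ v : Fin n → L, v ≠ 0 ∧ eval v (q.map (algebraMap K L)) = 0) :
    ∃ w : Fin n → K, w ≠ 0 ∧ eval w q = 0 := by
  obtain ⟨v, hv0, hqv⟩ := hL
  rw [eval_map, ← aeval_def] at hqv
  obtain ⟨θ, hθ⟩ := exists_notMem_range_algebraMap_of_finrank_ne_one (K := K) (L := L) (by omega)
  choose x y hxy using fun i => exists_algebraMap_add_mul_algebraMap_eq hdeg hθ (v i)
  by_cases hy : y = 0
  · have hv : v = algebraMap K L ∘ x := funext fun i => by simp [← hxy i, hy]
    refine ⟨x, fun hx => hv0 (by simp [hv, hx]), ?_⟩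
    rwa [hv, aeval_algebraMap_eq_zero_iff, aeval_eq_eval] at hqv
  by_cases hqy : eval y q = 0
  · exact ⟨y, hy, hqy⟩
  obtain ⟨t, ht⟩ := (q.restrictLine x y).exists_isRoot_of_natDegree_eq_three hdeg hθ
    (by rwa [aeval_restrictLine, funext hxy])
    (hq.natDegree_restrictLine x hqy)
  refine ⟨x + t • y, fun hxty => ?_, by rwa [← eval_restrictLine]⟩
  have hv : v = (θ - algebraMap K L t) • (algebraMap K L ∘ y) := by
    ext i
    have hx : x i = -(t * y i) := eq_neg_of_add_eq_zero_left (congrFun hxty i)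
    rw [← hxy i, hx]
    simp only [Pi.smul_apply, Function.comp_apply, smul_eq_mul, map_neg, map_mul]
    ring
  rw [hv, hq.aeval_smul, aeval_algebraMap_apply, aeval_eq_eval] at hqv
  have hθt : θ - algebraMap K L t ≠ 0 := sub_ne_zero.mpr fun h => hθ ⟨t, h.symm⟩
  exact mul_ne_zero (pow_ne_zero 3 hθt) ((map_ne_zero _).mpr hqy) hqv
end

section
/- Let K be a field of characteristic p > 0, let d = 3 if p = 2 and d = 2 otherwise, and let q be a homogeneous form of degree d over K. If L is a purely inseparable extension of K and q has a nontrivial zero over L, then q has a nontrivial zero over K. -/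
/-!
Over a quadratic extension `E = K(a)`, write a zero of a cubic form `q` as `x + a y` with
`x, y` over `K`. The cubic `g(t) = q(x + t y) ∈ K[t]` vanishes at `a`, so it is divisible by the
minimal polynomial of `a` and the remaining linear factor has a root in `K`; this gives a zero
over `K` (Springer's argument). In characteristic `2`, a purely inseparable extension is reached
from `K` by successively adjoining square roots, and the zero descends one step at a time.

For `p` odd, diagonalize the quadratic form as `∑ aₖ Xₖ²`. If `∑ aₖ uₖ² = 0` over `L`, raising to
the power `p ^ N` with all `uₖ ^ p ^ N = wₖ ∈ K` gives `∑ aₖ ^ (2r + 1) wₖ² = 0` in `K`, that is,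
`∑ aₖ (aₖ ^ r wₖ)² = 0`.
-/

open Module IntermediateField Matrix

namespace MvPolynomial

open scoped Pointwise in
theorem IsHomogeneous.exists_eq_sum_smul_prod_X {σ R : Type*} [CommSemiring R] [Fintype σ]
    {q : MvPolynomial σ R} {m : ℕ} (hq : q.IsHomogeneous m) :
    ∃ c : (Fin m → σ) → R, q = ∑ f, c f • ∏ l, X (f l) := by
  have hpow : (Set.range (X : σ → MvPolynomial σ R)) ^ m ⊆
      Set.range fun f : Fin m → σ => ∏ l, X (f l) := by
    intro x hx
    obtain ⟨g, rfl⟩ := Set.mem_pow.1 hx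
    choose f hf using fun l => (g l).2
    exact ⟨f, by simp [List.prod_ofFn, hf]⟩
  have hmem : q ∈ homogeneousSubmodule σ R m := hq
  rw [← homogeneousSubmodule_one_pow, homogeneousSubmodule_one_eq_span_X,
    Submodule.span_pow] at hmem
  obtain ⟨c, hc⟩ := (Submodule.mem_span_range_iff_exists_fun R).1 (Submodule.span_mono hpow hmem)
  exact ⟨c, hc.symm⟩

section CommRing

variable {σ R : Type*} [CommRing R] [Fintype σ] {q : MvPolynomial σ R} {m : ℕ}

theorem IsHomogeneous.aeval_smul_s10 (hq : q.IsHomogeneous m) {S : Type*} [CommRing S] [Algebra R S]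
    (s : S) (x : σ → S) : MvPolynomial.aeval (s • x) q = s ^ m * MvPolynomial.aeval x q := by
  obtain ⟨c, rfl⟩ := hq.exists_eq_sum_smul_prod_X
  simp [Finset.mul_sum, Finset.prod_mul_distrib, Algebra.smul_def, mul_left_comm]

theorem IsHomogeneous.natDegree_aeval_linear_le (hq : q.IsHomogeneous m) (x y : σ → R) :
    Polynomial.natDegree (MvPolynomial.aeval
      (fun i => Polynomial.C (y i) * Polynomial.X + Polynomial.C (x i)) q) ≤ m := by
  obtain ⟨c, rfl⟩ := hq.exists_eq_sum_smul_prod_X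
  simp only [map_sum, map_smul, map_prod, aeval_X]
  refine Polynomial.natDegree_sum_le_of_forall_le _ _ fun f _ =>
    (Polynomial.natDegree_smul_le _ _).trans <| (Polynomial.natDegree_prod_le _ _).trans ?_
  simpa using Finset.sum_le_sum fun l (_ : l ∈ Finset.univ) =>
    Polynomial.natDegree_linear_le (a := y (f l)) (b := x (f l))

theorem IsHomogeneous.coeff_aeval_linear (hq : q.IsHomogeneous m) (x y : σ → R) :
    Polynomial.coeff (MvPolynomial.aeval
      (fun i => Polynomial.C (y i) * Polynomial.X + Polynomial.C (x i)) q) m =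
      MvPolynomial.aeval y q := by
  obtain ⟨c, rfl⟩ := hq.exists_eq_sum_smul_prod_X
  simp only [map_sum, map_smul, map_prod, aeval_X, Polynomial.finsetSum_coeff,
    Polynomial.coeff_smul]
  refine Finset.sum_congr rfl fun f _ => ?_
  simpa using congrArg (c f • ·) (Polynomial.coeff_prod_of_natDegree_le (s := Finset.univ) _ 1
    fun l _ => Polynomial.natDegree_linear_le (a := y (f l)) (b := x (f l)))

end CommRing

section HasNontrivialZero

variable {σ R : Type*} [CommSemiring R]

def HasNontrivialZero (q : MvPolynomial σ R) (S : Type*) [CommSemiring S] [Algebra R S] : Prop :=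
  ∃ x : σ → S, x ≠ 0 ∧ aeval x q = 0

variable {q : MvPolynomial σ R} {S T : Type*} [CommSemiring S] [CommSemiring T] [Algebra R S]
  [Algebra R T]

theorem HasNontrivialZero.of_injective (f : S →ₐ[R] T) (hf : Function.Injective f)
    (h : q.HasNontrivialZero S) : q.HasNontrivialZero T := by
  obtain ⟨x, hx0, hx⟩ := h
  refine ⟨f ∘ x, fun h0 => hx0 (_root_.funext fun i => hf ?_), ?_⟩
  · simpa using congrFun h0 i
  · rw [Function.comp_def, ← comp_aeval_apply, hx, map_zero]

theorem hasNontrivialZero_of_forall_mem_range [Algebra S T] [IsScalarTower R S T]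
    (hinj : Function.Injective (algebraMap S T)) {x : σ → T} (hx0 : x ≠ 0) (hx : aeval x q = 0)
    (hrange : ∀ i, x i ∈ Set.range (algebraMap S T)) : q.HasNontrivialZero S := by
  choose y hy using hrange
  have hxy : algebraMap S T ∘ y = x := _root_.funext hy
  refine ⟨y, ?_, hinj ?_⟩
  · rintro rfl
    exact hx0 (by rw [← hxy]; ext; simp)
  · rw [map_zero, ← aeval_algebraMap_apply, hxy, hx]

theorem hasNontrivialZero_map_algebraMap_iff [Algebra S T] [IsScalarTower R S T] :
    (q.map (algebraMap R S)).HasNontrivialZero T ↔ q.HasNontrivialZero T := by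
  simp only [HasNontrivialZero, aeval_map_algebraMap]

end HasNontrivialZero

end MvPolynomial

theorem minpoly.natDegree_eq_two_of_le {K E : Type*} [Field K] [Field E] [Algebra K E] {a : E}
    (hint : IsIntegral K a) (ha : a ∉ Set.range (algebraMap K E))
    (hle : (minpoly K a).natDegree ≤ 2) : (minpoly K a).natDegree = 2 := by
  have h1 : (minpoly K a).natDegree ≠ 1 := fun h => ha (minpoly.natDegree_eq_one_iff.1 h)
  have h0 := minpoly.natDegree_pos hint
  omega

theorem exists_generator_of_finrank_eq_two {K E : Type*} [Field K] [Field E] [Algebra K E]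
    (hE : finrank K E = 2) :
    ∃ a : E, a ∉ Set.range (algebraMap K E) ∧ (minpoly K a).natDegree = 2 ∧
      ∀ z : E, ∃ c d : K, algebraMap K E c * a + algebraMap K E d = z := by
  have : FiniteDimensional K E := Module.finite_of_finrank_eq_succ hE
  obtain ⟨a, ha⟩ : ∃ a : E, a ∉ Set.range (algebraMap K E) := by
    by_contra! h
    have := finrank_le_one (R := K) (1 : E) fun w => by
      obtain ⟨c, rfl⟩ := h w
      exact ⟨c, (Algebra.algebraMap_eq_smul_one c).symm⟩
    omega
  refine ⟨a, ha, minpoly.natDegree_eq_two_of_le (Algebra.IsIntegral.isIntegral a) ha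
    (hE ▸ minpoly.natDegree_le a), fun z => ?_⟩
  have hli : LinearIndependent K ![a, 1] := by
    refine LinearIndependent.pair_iff.2 fun s t hst => ?_
    rw [Algebra.smul_def, Algebra.smul_def, mul_one] at hst
    obtain rfl : s = 0 := by
      by_contra hs
      exact ha ⟨-t / s, by
        rw [map_div₀, map_neg, div_eq_iff (by simpa using hs)]
        linear_combination -hst⟩
    simpa using hst
  have hz : z ∈ Submodule.span K (Set.range ![a, 1]) := by
    rw [hli.span_eq_top_of_card_eq_finrank' (by simp [hE])]
    exact Submodule.mem_top
  obtain ⟨c, hc⟩ := (Submodule.mem_span_range_iff_exists_fun K).1 hz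
  exact ⟨c 0, c 1, by simpa [Fin.sum_univ_two, Algebra.smul_def] using hc⟩

theorem Polynomial.exists_isRoot_of_natDegree_eq_three_s10 {K E : Type*} [Field K] [Field E]
    [Algebra K E] {g : Polynomial K} (hg : g.natDegree = 3) {a : E}
    (ha : (minpoly K a).natDegree = 2) (hga : aeval a g = 0) : ∃ t, g.IsRoot t := by
  obtain ⟨r, rfl⟩ := minpoly.dvd K a hga
  have hr0 : r ≠ 0 := by
    rintro rfl
    simp at hg
  have hr1 := natDegree_mul (ne_zero_of_natDegree_gt (n := 0) (by rw [ha]; omega)) hr0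
  rw [hg, ha] at hr1
  obtain ⟨t, ht⟩ := exists_root_of_degree_eq_one (p := r)
    ((degree_eq_iff_natDegree_eq_of_pos one_pos).2 (by omega))
  exact ⟨t, by simp [ht.eq_zero]⟩

theorem finrank_adjoin_simple_eq_two_of_sq_mem {F L : Type*} [Field F] [Field L] [Algebra F L]
    {a : L} (ha : a ∉ Set.range (algebraMap F L)) (ha2 : a ^ 2 ∈ Set.range (algebraMap F L)) :
    finrank F F⟮a⟯ = 2 := by
  obtain ⟨b, hb⟩ := ha2
  have hmonic : (Polynomial.X ^ 2 - Polynomial.C b).Monic :=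
    Polynomial.monic_X_pow_sub_C b two_ne_zero
  have hroot : Polynomial.aeval a (Polynomial.X ^ 2 - Polynomial.C b) = 0 := by simp [hb]
  have hint : IsIntegral F a := ⟨_, hmonic, hroot⟩
  rw [IntermediateField.adjoin.finrank hint]
  refine minpoly.natDegree_eq_two_of_le hint ha ?_
  simpa using Polynomial.natDegree_le_natDegree (minpoly.min F a hmonic hroot)

namespace MvPolynomial

universe v

variable {σ : Type*} [Fintype σ]

theorem IsHomogeneous.hasNontrivialZero_of_finrank_eq_two {K E : Type*} [Field K] [Field E]
    [Algebra K E] {q : MvPolynomial σ K} (hq : q.IsHomogeneous 3) (hE : finrank K E = 2)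
    (h : q.HasNontrivialZero E) : q.HasNontrivialZero K := by
  obtain ⟨a, ha, hdeg, hspan⟩ := exists_generator_of_finrank_eq_two hE
  obtain ⟨v, hv0, hv⟩ := h
  choose y x hxy using fun i => hspan (v i)
  set g : Polynomial K :=
    MvPolynomial.aeval (fun i => Polynomial.C (y i) * Polynomial.X + Polynomial.C (x i)) q
  have hg_aeval : ∀ t : E, Polynomial.aeval t g =
      MvPolynomial.aeval (fun i => algebraMap K E (y i) * t + algebraMap K E (x i)) q := by
    intro t
    simp [g, comp_aeval_apply]
  have hg_eval : ∀ t : K, g.eval t = MvPolynomial.aeval (fun i => y i * t + x i) q := by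
    intro t
    simp [g, ← Polynomial.coe_aeval_eq_eval, comp_aeval_apply]
  by_cases hy : MvPolynomial.aeval y q = 0
  · by_cases hy0 : y = 0
    · refine hasNontrivialZero_of_forall_mem_range (algebraMap K E).injective hv0 hv fun i => ?_
      exact ⟨x i, by simp [← hxy i, hy0]⟩
    · exact ⟨y, hy0, hy⟩
  have hg3 : g.natDegree = 3 := le_antisymm (hq.natDegree_aeval_linear_le x y)
    (Polynomial.le_natDegree_of_ne_zero (by rwa [hq.coeff_aeval_linear]))
  obtain ⟨t, ht⟩ := Polynomial.exists_isRoot_of_natDegree_eq_three_s10 hg3 hdeg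
    (by rw [hg_aeval, ← hv]; simp [hxy])
  refine ⟨fun i => y i * t + x i, fun h0 => hy ?_, ?_⟩
  -- a vanishing witness would make `v` the multiple `(a - t) • y`, so `q(v) = (a - t)³ q(y)`
  · have hv' : v = (a - algebraMap K E t) • (algebraMap K E ∘ y) := by
      ext i
      have hi := congrFun h0 i
      simp only [Pi.zero_apply] at hi
      simp [← hxy i, show x i = -(y i * t) by linear_combination hi]
      ring
    rw [hv', hq.aeval_smul_s10, aeval_algebraMap_apply] at hv
    have hat : a - algebraMap K E t ≠ 0 := fun h => ha ⟨t, (sub_eq_zero.1 h).symm⟩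
    simpa [hat] using hv
  · rw [← hg_eval, ht.eq_zero]

/-- Induction on `∑ i, M i`: with `a = v i₀ ^ 2 ^ m` and `M i₀ = m + 1`, a zero over `F⟮a⟯`
comes down to `F` because `[F⟮a⟯ : F] ≤ 2`. -/
theorem IsHomogeneous.hasNontrivialZero_of_pow_two_pow_mem {F L : Type v} [Field F] [Field L]
    [Algebra F L] {q : MvPolynomial σ F} (hq : q.IsHomogeneous 3) {v : σ → L} (hv0 : v ≠ 0)
    (hv : MvPolynomial.aeval v q = 0) (M : σ → ℕ)
    (hM : ∀ i, v i ^ 2 ^ M i ∈ Set.range (algebraMap F L)) : q.HasNontrivialZero F := by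
  induction hN : ∑ i, M i using Nat.strong_induction_on generalizing F q M with
  | _ N ih =>
  classical
  by_cases hall : ∀ i, v i ∈ Set.range (algebraMap F L)
  · exact hasNontrivialZero_of_forall_mem_range (algebraMap F L).injective hv0 hv hall
  obtain ⟨i₀, hi₀⟩ := not_forall.1 hall
  obtain ⟨m, hm⟩ : ∃ m, M i₀ = m + 1 :=
    Nat.exists_eq_succ_of_ne_zero fun h => hi₀ (by simpa [h] using hM i₀)
  set a := v i₀ ^ 2 ^ m
  have ha2 : a ^ 2 ∈ Set.range (algebraMap F L) := by
    rw [← pow_mul, ← pow_succ, ← hm]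
    exact hM i₀
  set M' := Function.update M i₀ m
  have hlt : ∑ i, M' i < N := hN ▸ Finset.sum_lt_sum
    (fun i _ => by rcases eq_or_ne i i₀ with rfl | hi <;> simp [M', *])
    ⟨i₀, Finset.mem_univ _, by simp [M', hm]⟩
  have hM' : ∀ (F' : Type v) [Field F'] [Algebra F F'] [Algebra F' L] [IsScalarTower F F' L],
      a ∈ Set.range (algebraMap F' L) → ∀ i, v i ^ 2 ^ M' i ∈ Set.range (algebraMap F' L) := by
    intro F' _ _ _ _ ha i
    rcases eq_or_ne i i₀ with rfl | hi
    · simpa [M'] using ha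
    · obtain ⟨c, hc⟩ := hM i
      exact ⟨algebraMap F F' c, by simp [M', hi, ← IsScalarTower.algebraMap_apply, hc]⟩
  by_cases ha : a ∈ Set.range (algebraMap F L)
  · exact ih _ hlt hq hv M' (hM' F ha) rfl
  have hva : MvPolynomial.aeval v (q.map (algebraMap F F⟮a⟯)) = 0 := by
    rwa [aeval_map_algebraMap]
  have haa : a ∈ Set.range (algebraMap F⟮a⟯ L) :=
    ⟨⟨a, IntermediateField.mem_adjoin_simple_self F a⟩, rfl⟩
  have h := ih _ hlt (hq.map (algebraMap F F⟮a⟯)) hva M' (hM' F⟮a⟯ haa) rfl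
  rw [hasNontrivialZero_map_algebraMap_iff] at h
  have hF : finrank F F⟮a⟯ = 2 := finrank_adjoin_simple_eq_two_of_sq_mem ha ha2
  exact hq.hasNontrivialZero_of_finrank_eq_two hF h

theorem IsHomogeneous.hasNontrivialZero_of_isPurelyInseparable_of_degree_three {K L : Type*}
    [Field K] [Field L] [Algebra K L] [ExpChar K 2] [IsPurelyInseparable K L]
    {q : MvPolynomial σ K} (hq : q.IsHomogeneous 3) (h : q.HasNontrivialZero L) :
    q.HasNontrivialZero K := by
  obtain ⟨v, hv0, hv⟩ := h
  choose M hM using fun i => IsPurelyInseparable.pow_mem K 2 (v i)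
  have hM' : ∀ i, v i ^ 2 ^ M i ∈ Set.range (algebraMap (⊥ : IntermediateField K L) L) := by
    intro i
    obtain ⟨c, hc⟩ := hM i
    exact ⟨algebraMap K _ c, by rw [← IsScalarTower.algebraMap_apply, hc]⟩
  have h := (hq.map (algebraMap K (⊥ : IntermediateField K L))).hasNontrivialZero_of_pow_two_pow_mem
    hv0 (by rwa [aeval_map_algebraMap]) M hM'
  rw [hasNontrivialZero_map_algebraMap_iff] at h
  exact h.of_injective (botEquiv K L).toAlgHom (botEquiv K L).injective

end MvPolynomial

theorem Matrix.IsSymm.exists_transpose_mul_mul_eq_diagonal {σ K : Type*} [Fintype σ]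
    [DecidableEq σ] [Field K] [Invertible (2 : K)] {A : Matrix σ σ K} (hA : A.IsSymm) :
    ∃ (P : Matrix σ σ K) (a : σ → K), IsUnit P.det ∧ Pᵀ * A * P = diagonal a := by
  obtain ⟨b, hb⟩ := LinearMap.BilinForm.exists_orthogonal_basis
    (LinearMap.BilinForm.isSymm_iff.1 (isSymm_toBilin'_iff_isSymm.2 hA))
  set b' := b.reindex (b.indexEquiv (Pi.basisFun K σ))
  refine ⟨(Pi.basisFun K σ).toMatrix b', fun k => A.toBilin' (b' k) (b' k),
    (@isUnit_of_invertible _ _ _ ((Pi.basisFun K σ).invertibleToMatrix b')).map detMonoidHom, ?_⟩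
  have hA' : A = LinearMap.BilinForm.toMatrix (Pi.basisFun K σ) A.toBilin' := by
    rw [LinearMap.BilinForm.toMatrix_basisFun, LinearMap.BilinForm.toMatrix'_toBilin']
  conv_lhs => rw [hA', LinearMap.BilinForm.toMatrix_mul_basis_toMatrix]
  ext k l
  rw [LinearMap.BilinForm.toMatrix_apply]
  rcases eq_or_ne k l with rfl | hkl
  · simp
  · rw [diagonal_apply_ne _ hkl]
    simpa [b'] using hb fun h => hkl ((b.indexEquiv (Pi.basisFun K σ)).symm.injective h)

theorem Matrix.mulVec_dotProduct_mulVec_mulVec {σ S : Type*} [Fintype σ] [CommSemiring S]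
    (A P : Matrix σ σ S) (u : σ → S) :
    (P *ᵥ u) ⬝ᵥ (A *ᵥ (P *ᵥ u)) = u ⬝ᵥ ((Pᵀ * A * P) *ᵥ u) := by
  rw [Matrix.mul_assoc, ← mulVec_mulVec, ← mulVec_mulVec, dotProduct_mulVec u, vecMul_transpose]

theorem IsPurelyInseparable.exists_forall_pow_mem_range (K : Type*) {L ι : Type*} [Field K]
    [Field L] [Algebra K L] (p : ℕ) [ExpChar K p] [IsPurelyInseparable K L] [Fintype ι]
    (u : ι → L) : ∃ N, ∀ i, u i ^ p ^ N ∈ (algebraMap K L).range := by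
  choose M hM using fun i => IsPurelyInseparable.pow_mem K p (u i)
  refine ⟨∑ i, M i, fun i => ?_⟩
  rw [← Nat.add_sub_cancel' (Finset.single_le_sum (fun j _ => (M j).zero_le) (Finset.mem_univ i)),
    pow_add, pow_mul]
  exact _root_.pow_mem (hM i) _

namespace MvPolynomial

section Quadratic

variable {σ : Type*} [Fintype σ]

theorem IsHomogeneous.exists_isSymm_eq_dotProduct_mulVec {R : Type*} [CommRing R]
    [Invertible (2 : R)] {q : MvPolynomial σ R} (hq : q.IsHomogeneous 2) :
    ∃ A : Matrix σ σ R, A.IsSymm ∧ q = X ⬝ᵥ (A.map C *ᵥ X) := by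
  obtain ⟨c, rfl⟩ := hq.exists_eq_sum_smul_prod_X
  set B : Matrix σ σ R := Matrix.of fun i j => c ![i, j]
  have hB : ∑ f, c f • ∏ l, X (f l) = X ⬝ᵥ (B.map C *ᵥ X) := by
    rw [← (piFinTwoEquiv fun _ => σ).symm.sum_comp, Fintype.sum_prod_type]
    simp only [B, dotProduct, mulVec, Finset.mul_sum, smul_eq_C_mul, Fin.prod_univ_two,
      piFinTwoEquiv_symm_apply, map_apply, of_apply]
    exact Finset.sum_congr rfl fun i _ => Finset.sum_congr rfl fun j _ => by
      rw [mul_left_comm]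
      rfl
  have hBt : X ⬝ᵥ (Bᵀ.map C *ᵥ X) = X ⬝ᵥ (B.map C *ᵥ (X : σ → MvPolynomial σ R)) := by
    rw [transpose_map, dotProduct_mulVec, vecMul_transpose, dotProduct_comm]
  have hmap : ((⅟2 : R) • (B + Bᵀ)).map C =
      (C (⅟2 : R) : MvPolynomial σ R) • (B.map C + Bᵀ.map C : Matrix σ σ (MvPolynomial σ R)) := by
    ext
    simp [mul_add]
  refine ⟨(⅟2 : R) • (B + Bᵀ), (isSymm_add_transpose_self B).smul _, ?_⟩
  rw [hB, hmap, smul_mulVec, add_mulVec, dotProduct_smul, dotProduct_add, hBt, ← two_mul,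
    smul_eq_mul, ← mul_assoc, ← map_ofNat C 2, ← map_mul, invOf_mul_self, map_one, one_mul]

variable {K : Type*} [Field K]

theorem IsHomogeneous.exists_bind₁_mulVec_eq_sum_C_mul_X_sq [DecidableEq σ]
    [Invertible (2 : K)] {q : MvPolynomial σ K} (hq : q.IsHomogeneous 2) :
    ∃ (P : Matrix σ σ K) (a : σ → K), IsUnit P.det ∧
      bind₁ (P.map C *ᵥ X) q = ∑ k, C (a k) * X k ^ 2 := by
  obtain ⟨A, hA, rfl⟩ := hq.exists_isSymm_eq_dotProduct_mulVec
  obtain ⟨P, a, hP, hPAP⟩ := hA.exists_transpose_mul_mul_eq_diagonal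
  refine ⟨P, a, hP, ?_⟩
  have hbind : bind₁ (P.map C *ᵥ X) (X ⬝ᵥ (A.map C *ᵥ X)) =
      (P.map C *ᵥ X) ⬝ᵥ (A.map C *ᵥ (P.map C *ᵥ X)) := by
    simp only [dotProduct, mulVec, map_sum, map_mul, bind₁_X_right, bind₁_C_right, map_apply]
  rw [hbind, mulVec_dotProduct_mulVec_mulVec, ← transpose_map, ← Matrix.map_mul,
    ← Matrix.map_mul, hPAP, diagonal_map (map_zero _)]
  simp [dotProduct, mulVec_diagonal, sq, mul_left_comm]

theorem hasNontrivialZero_bind₁_mulVec_iff [DecidableEq σ] {q : MvPolynomial σ K}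
    {P : Matrix σ σ K} (hP : IsUnit P.det) {S : Type*} [CommRing S] [Algebra K S] :
    (bind₁ (P.map C *ᵥ X) q).HasNontrivialZero S ↔ q.HasNontrivialZero S := by
  set P' := P.map (algebraMap K S)
  have hP' : IsUnit P'.det := by
    rw [show P'.det = algebraMap K S P.det from (RingHom.map_det _ _).symm]
    exact hP.map _
  have key : ∀ u, aeval u (bind₁ (P.map C *ᵥ X) q) = aeval (P' *ᵥ u) q := by
    intro u
    rw [aeval_bind₁]
    congr 1
    ext i
    simp [P', mulVec, dotProduct]
  constructor
  · rintro ⟨u, hu0, hu⟩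
    refine ⟨P' *ᵥ u, fun h0 => hu0 ?_, by rwa [← key]⟩
    rw [← one_mulVec u, ← nonsing_inv_mul _ hP', ← mulVec_mulVec, h0, mulVec_zero]
  · rintro ⟨v, hv0, hv⟩
    refine ⟨P'⁻¹ *ᵥ v, fun h0 => hv0 ?_, ?_⟩
    · rw [← one_mulVec v, ← mul_nonsing_inv _ hP', ← mulVec_mulVec, h0, mulVec_zero]
    · rwa [key, mulVec_mulVec, mul_nonsing_inv _ hP', one_mulVec]

theorem hasNontrivialZero_sum_C_mul_X_sq_of_pow {e : ℕ} (he : Odd e) (a : σ → K)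
    (h : (∑ k, C (a k ^ e) * X k ^ 2 : MvPolynomial σ K).HasNontrivialZero K) :
    (∑ k, C (a k) * X k ^ 2 : MvPolynomial σ K).HasNontrivialZero K := by
  classical
  obtain ⟨r, rfl⟩ := he
  obtain ⟨w, hw0, hw⟩ := h
  by_cases ha : ∃ k, a k = 0
  · obtain ⟨k, hk⟩ := ha
    refine ⟨Pi.single k 1, by simp, ?_⟩
    simp only [map_sum, map_mul, aeval_C, aeval_X, map_pow, Algebra.algebraMap_self,
      RingHom.id_apply]
    exact Finset.sum_eq_zero fun l _ => by rcases eq_or_ne l k with rfl | hl <;> simp [*]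
  simp only [not_exists] at ha
  obtain ⟨k, hk⟩ := Function.ne_iff.1 hw0
  refine ⟨fun k => a k ^ r * w k, Function.ne_iff.2 ⟨k, mul_ne_zero (pow_ne_zero _ (ha k)) hk⟩, ?_⟩
  rw [← hw]
  simp only [map_sum, map_mul, aeval_C, aeval_X, map_pow, Algebra.algebraMap_self,
    RingHom.id_apply]
  exact Finset.sum_congr rfl fun k _ => by ring

theorem hasNontrivialZero_sum_C_mul_X_sq_of_isPurelyInseparable {L : Type*} [Field L]
    [Algebra K L] (p : ℕ) [ExpChar K p] [IsPurelyInseparable K L] (hp : Odd p) (a : σ → K)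
    (h : (∑ k, C (a k) * X k ^ 2 : MvPolynomial σ K).HasNontrivialZero L) :
    (∑ k, C (a k) * X k ^ 2 : MvPolynomial σ K).HasNontrivialZero K := by
  obtain ⟨u, hu0, hu⟩ := h
  obtain ⟨N, hN⟩ := IsPurelyInseparable.exists_forall_pow_mem_range K p u
  choose w hw using hN
  have : ExpChar L p := expChar_of_injective_algebraMap (algebraMap K L).injective p
  refine hasNontrivialZero_sum_C_mul_X_sq_of_pow (hp.pow (n := N)) a ⟨w, ?_, ?_⟩
  · rintro rfl
    obtain ⟨k, hk⟩ := Function.ne_iff.1 hu0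
    exact hk ((pow_eq_zero_iff (expChar_pow_pos K p N).ne').1 (by rw [← hw k]; simp))
  · apply (algebraMap K L).injective
    have hfrob := congrArg (iterateFrobenius L p N) hu
    simp only [map_sum, map_mul, aeval_C, aeval_X, map_pow, iterateFrobenius_def] at hfrob
    rw [map_zero, ← zero_pow (expChar_pow_pos K p N).ne', ← hfrob]
    simp [← hw]

theorem IsHomogeneous.hasNontrivialZero_of_isPurelyInseparable_of_degree_two {L : Type*}
    [Field L] [Algebra K L] (p : ℕ) [ExpChar K p] [IsPurelyInseparable K L] (hp : Odd p)
    {q : MvPolynomial σ K} (hq : q.IsHomogeneous 2) (h : q.HasNontrivialZero L) :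
    q.HasNontrivialZero K := by
  classical
  have h2 : (2 : K) ≠ 0 := by
    apply Ring.two_ne_zero
    rcases ‹ExpChar K p› with _ | ⟨-⟩
    · rw [ringChar.eq_zero]
      decide
    · rw [ringChar.eq K p]
      rintro rfl
      exact absurd hp (by decide)
  have := invertibleOfNonzero h2
  obtain ⟨P, a, hP, hPq⟩ := hq.exists_bind₁_mulVec_eq_sum_C_mul_X_sq
  rw [← hasNontrivialZero_bind₁_mulVec_iff hP, hPq] at h ⊢
  exact hasNontrivialZero_sum_C_mul_X_sq_of_isPurelyInseparable p hp a h

end Quadratic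

end MvPolynomial

open MvPolynomial in
theorem stmt_10 (K L : Type*) [Field K] [Field L] [Algebra K L]
    (p : ℕ) (hp : p.Prime) [CharP K p] [IsPurelyInseparable K L]
    (d : ℕ) (hd : d = if p = 2 then 3 else 2)
    (n : ℕ) (q : MvPolynomial (Fin n) K) (hq : q.IsHomogeneous d)
    (hL : ∃ v : Fin n → L, v ≠ 0 ∧ eval v (q.map (algebraMap K L)) = 0) :
    ∃ w : Fin n → K, w ≠ 0 ∧ eval w q = 0 := by
  have : Fact p.Prime := ⟨hp⟩
  obtain ⟨v, hv0, hv⟩ := hL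
  have hzero : q.HasNontrivialZero L := ⟨v, hv0, by rwa [eval_map, ← aeval_def] at hv⟩
  obtain ⟨w, hw0, hw⟩ : q.HasNontrivialZero K := by
    by_cases hp2 : p = 2
    · subst hp2
      rw [if_pos rfl] at hd
      subst hd
      exact hq.hasNontrivialZero_of_isPurelyInseparable_of_degree_three hzero
    · rw [if_neg hp2] at hd
      subst hd
      exact hq.hasNontrivialZero_of_isPurelyInseparable_of_degree_two p (hp.odd_of_ne_two hp2)
        hzero
  exact ⟨w, hw0, by rwa [← coe_aeval_eq_eval]⟩
end
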